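/- arXiv:2107.10098 — 5 statements merged into one kernel-verified Lean document; each statement's English description precedes it below -/
import Mathlib

section
/- Sparsest linear transforms are permutations: Let Λ : Γ → ℝ^{m×n} be a function with sparsity pattern S, let L ∈ ℝ^{m×m} be invertible, and let S̃ be the sparsity pattern of γ ↦ LΛ(γ). Assume (1) for every column index j, span(Λ_{·,j}(Γ)) = ℝ^m_{S_{·,j}}; (2) |S̃| ≤ |S|; (3) for every p ∈ {1,...,m} there is an index set 𝒥 ⊆ {1,...,n} with ∩_{j∈𝒥} S_{·,j} = {p}. Then L is a permutation-scaling matrix, i.e., L = PD for a permutation matrix P and invertible diagonal matrix D. -/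
open Finset Matrix

/-- Sparsest linear transforms are permutations. `S` is the sparsity pattern of
`Λ : Γ → ℝ^{m×n}`, `S̃` the sparsity pattern of `γ ↦ L Λ(γ)`. If (1) for each column `j` the
columns `Λ_{·,j}(Γ)` span exactly the coordinate subspace `ℝ^m_{S_{·,j}}`, (2) `|S̃| ≤ |S|`,
and (3) for each `p` some intersection of column slices of `S` equals `{p}`, then `L` is a
permutation-scaling matrix. -/
theorem sparsest_linear_transform_is_permutation {Γ : Type*} (m n : ℕ)
    (Λ : Γ → Matrix (Fin m) (Fin n) ℝ)
    (L : Matrix (Fin m) (Fin m) ℝ) (hL : IsUnit L)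
    (S St : Set (Fin m × Fin n))
    (hS : S = {p | ∃ γ, Λ γ p.1 p.2 ≠ 0})
    (hSt : St = {p | ∃ γ, (L * Λ γ) p.1 p.2 ≠ 0})
    (hspan : ∀ j : Fin n, ∀ x : Fin m → ℝ,
        (x ∈ Submodule.span ℝ {c : Fin m → ℝ | ∃ γ, c = fun i => Λ γ i j}) ↔
          (∀ i, (i, j) ∉ S → x i = 0))
    (hcard : St.ncard ≤ S.ncard)
    (hcrit : ∀ p : Fin m, ∃ J : Set (Fin n),
        {i : Fin m | ∀ j ∈ J, (i, j) ∈ S} = {p}) :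
    ∃ (σ : Equiv.Perm (Fin m)) (d : Fin m → ℝ), (∀ i, d i ≠ 0) ∧
      ∀ r i, L r i = if r = σ i then d i else 0 := by
  classical
  -- column supports of L
  set C : Fin m → Finset (Fin m) := fun i => univ.filter (fun r => L r i ≠ 0) with hCdef
  have hmemC : ∀ r i, r ∈ C i ↔ L r i ≠ 0 := by
    intro r i; simp [hCdef]
  -- columns of L are linearly independent
  have hcols : LinearIndependent ℝ (fun i => Lᵀ i) :=
    Matrix.linearIndependent_cols_iff_isUnit.2 hL
  -- Hall condition
  have hall : ∀ A : Finset (Fin m), A.card ≤ (A.biUnion C).card := by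
    intro A
    set B := A.biUnion C with hB
    have h1 : LinearIndependent ℝ (fun (i : A) => Lᵀ (i : Fin m)) :=
      hcols.comp _ Subtype.val_injective
    have hdisj : Disjoint (Submodule.span ℝ (Set.range fun (i : A) => Lᵀ (i : Fin m)))
        (LinearMap.ker (LinearMap.funLeft ℝ ℝ (Subtype.val : B → Fin m))) := by
      rw [Submodule.disjoint_def]
      have hsupp : ∀ x ∈ Submodule.span ℝ (Set.range fun (i : A) => Lᵀ (i : Fin m)),
          ∀ r, r ∉ B → x r = 0 := by
        intro x hx
        refine Submodule.span_induction ?_ ?_ ?_ ?_ hx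
        · rintro v ⟨i, rfl⟩ r hr
          by_contra h
          exact hr (hB ▸ Finset.mem_biUnion.2 ⟨i, i.2, (hmemC r i).2
            (by simpa [Matrix.transpose_apply] using h)⟩)
        · intro r _; rfl
        · intro a b _ _ ha hb r hr; simp [ha r hr, hb r hr]
        · intro c a _ ha r hr; simp [ha r hr]
      intro x hx hker
      have hker' : ∀ r : B, x r = 0 := by
        intro r
        have := congrFun (LinearMap.mem_ker.1 hker) r
        simpa [LinearMap.funLeft] using this
      ext r
      by_cases hr : r ∈ B
      · exact hker' ⟨r, hr⟩
      · exact hsupp x hx r hr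
    have h2 : LinearIndependent ℝ
        ((LinearMap.funLeft ℝ ℝ (Subtype.val : B → Fin m)) ∘ (fun (i : A) => Lᵀ (i : Fin m))) :=
      h1.map hdisj
    have h3 := h2.fintype_card_le_finrank
    simpa [Module.finrank_pi] using h3
  -- Hall's theorem: system of distinct representatives
  obtain ⟨f, hfinj, hfC⟩ := (Finset.all_card_le_biUnion_card_iff_exists_injective C).1 hall
  -- column slices
  set Sc : Fin n → Finset (Fin m) := fun j => univ.filter (fun i => (i, j) ∈ S) with hScdef
  set Stc : Fin n → Finset (Fin m) := fun j => univ.filter (fun i => (i, j) ∈ St) with hStcdef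
  have hSzero : ∀ (γ) (i : Fin m) (j : Fin n), (i, j) ∉ S → Λ γ i j = 0 := by
    intro γ i j h
    rw [hS] at h
    by_contra hc
    exact h ⟨γ, hc⟩
  -- key: Stc j = (Sc j).biUnion C
  have hkey : ∀ j, Stc j = (Sc j).biUnion C := by
    intro j
    ext r
    simp only [hStcdef, hScdef, Finset.mem_filter, Finset.mem_univ, true_and,
      Finset.mem_biUnion, hmemC, hSt, Set.mem_setOf_eq]
    constructor
    · rintro ⟨γ, hγ⟩
      by_contra h
      push_neg at h
      apply hγ
      rw [Matrix.mul_apply]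
      apply Finset.sum_eq_zero
      intro i _
      by_cases hi : (i, j) ∈ S
      · rw [h i hi, zero_mul]
      · rw [hSzero γ i j hi, mul_zero]
    · rintro ⟨i, hiS, hLri⟩
      by_contra h
      push_neg at h
      -- the functional x ↦ (L x) r vanishes on the span
      have hei : (Pi.single i (1:ℝ)) ∈ Submodule.span ℝ
          {c : Fin m → ℝ | ∃ γ, c = fun i' => Λ γ i' j} := by
        rw [hspan]
        intro i' hi'
        rcases eq_or_ne i' i with rfl | hne
        · exact absurd hiS hi'
        · exact Pi.single_eq_of_ne hne 1
      set φ : (Fin m → ℝ) →ₗ[ℝ] ℝ := (LinearMap.proj r).comp L.mulVecLin with hφ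
      have hφ0 : ∀ x ∈ Submodule.span ℝ {c : Fin m → ℝ | ∃ γ, c = fun i' => Λ γ i' j},
          φ x = 0 := by
        intro x hx
        refine Submodule.span_induction ?_ ?_ ?_ ?_ hx
        · rintro v ⟨γ, rfl⟩
          have := h γ
          simpa [hφ, Matrix.mulVec, Matrix.mul_apply, dotProduct] using this
        · simp
        · intro a b _ _ ha hb; simp [ha, hb]
        · intro c a _ ha; simp [ha]
      have := hφ0 _ hei
      rw [hφ] at this
      simp [Matrix.mulVec_single, Matrix.mulVec, dotProduct, Pi.single_apply] at this
      exact hLri this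
  -- cardinality as fiberwise sums
  have hcardS : ∀ (T : Set (Fin m × Fin n)),
      T.ncard = ∑ j : Fin n, (univ.filter (fun i => (i, j) ∈ T)).card := by
    intro T
    rw [Set.ncard_eq_toFinset_card' T]
    rw [Finset.card_eq_sum_card_fiberwise (f := Prod.snd) (t := univ) (fun x _ => mem_univ x.2)]
    refine Finset.sum_congr rfl ?_
    intro j _
    refine Finset.card_bij (fun x _ => x.1) ?_ ?_ ?_
    · rintro ⟨i, j'⟩ hx
      simp only [Finset.mem_filter, Set.mem_toFinset] at hx
      obtain ⟨h1, h2⟩ := hx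
      subst h2
      simp [h1]
    · rintro ⟨i1, j1⟩ h1 ⟨i2, j2⟩ h2 he
      simp only [Finset.mem_filter, Set.mem_toFinset] at h1 h2
      simp only at he
      simp [he, h1.2, h2.2]
    · intro i hi
      simp only [Finset.mem_filter, Finset.mem_univ, true_and] at hi
      exact ⟨(i, j), by simp [hi], rfl⟩
  -- per-column equality of cardinals
  have hle : ∀ j, (Sc j).card ≤ (Stc j).card := by
    intro j; rw [hkey j]; exact hall (Sc j)
  have hsum : ∑ j : Fin n, (Stc j).card ≤ ∑ j : Fin n, (Sc j).card := by
    rw [← hcardS S, ← hcardS St]; exact hcard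
  have heq : ∀ j, (Sc j).card = (Stc j).card := by
    have hs : ∑ j : Fin n, (Sc j).card = ∑ j : Fin n, (Stc j).card :=
      le_antisymm (Finset.sum_le_sum fun j _ => hle j) hsum
    intro j
    by_contra hne
    have hlt : (Sc j).card < (Stc j).card := lt_of_le_of_ne (hle j) hne
    have : ∑ j : Fin n, (Sc j).card < ∑ j : Fin n, (Stc j).card :=
      Finset.sum_lt_sum (fun j _ => hle j) ⟨j, mem_univ j, hlt⟩
    omega
  -- Stc j = image of Sc j under f
  have himg : ∀ j, Stc j = (Sc j).image f := by
    intro j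
    have hsub : (Sc j).image f ⊆ Stc j := by
      rw [hkey j]
      intro r hr
      obtain ⟨i, hi, rfl⟩ := Finset.mem_image.1 hr
      exact Finset.mem_biUnion.2 ⟨i, hi, hfC i⟩
    have hcards : (Stc j).card ≤ ((Sc j).image f).card := by
      rw [Finset.card_image_of_injective _ hfinj, ← heq j]
    exact (Finset.eq_of_subset_of_card_le hsub hcards).symm
  -- f is bijective
  have hfbij : Function.Bijective f := Finite.injective_iff_bijective.1 hfinj
  refine ⟨Equiv.ofBijective f hfbij, fun i => L (f i) i, fun i => (hmemC _ _).1 (hfC i), ?_⟩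
  intro r i
  simp only [Equiv.ofBijective_apply]
  rcases eq_or_ne r (f i) with rfl | hne
  · simp
  · rw [if_neg hne]
    by_contra hLri
    -- r ∈ C i; use criterion at i
    obtain ⟨J, hJ⟩ := hcrit i
    obtain ⟨i₀, hi₀⟩ := hfbij.2 r
    have hi₀K : ∀ j ∈ J, (i₀, j) ∈ S := by
      intro j hj
      have hiScj : i ∈ Sc j := by
        simp only [hScdef, Finset.mem_filter, Finset.mem_univ, true_and]
        have : i ∈ ({i} : Set (Fin m)) := rfl
        rw [← hJ] at this
        exact this j hj
      have hrSt : r ∈ Stc j := by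
        rw [hkey j]
        exact Finset.mem_biUnion.2 ⟨i, hiScj, (hmemC r i).2 hLri⟩
      rw [himg j] at hrSt
      obtain ⟨a, haScj, hfa⟩ := Finset.mem_image.1 hrSt
      have : a = i₀ := hfinj (hfa.trans hi₀.symm)
      subst this
      simpa [hScdef] using haScj
    have : i₀ ∈ ({i} : Set (Fin m)) := by rw [← hJ]; exact hi₀K
    have : i₀ = i := this
    subst this
    exact hne hi₀.symm
end

section
/- Let Λ : Γ → ℝ^{m×m} have sparsity pattern S, let L ∈ ℝ^{m×m} be invertible, and let S̃ be the sparsity pattern of γ ↦ Lᵀ Λ(γ) L. Assume (1) span(Λ(Γ)) = ℝ^{m×m}_S; (2) |S̃| ≤ |S|; (3) for every p ∈ {1,...,m}, there exist index sets ℐ, 𝒥 ⊆ {1,...,m} with (∩_{i∈ℐ} S_{i,·}) ∩ (∩_{j∈𝒥} S_{·,j}) = {p}. Then L is a permutation-scaling matrix. -/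
open Matrix

/-- Sparsest conjugation implies permutation. `S` is the sparsity pattern of
`Λ : Γ → ℝ^{m×m}`, `S̃` the sparsity pattern of `γ ↦ Lᵀ Λ(γ) L`. If (1) `span(Λ(Γ))` is
exactly the aligned subspace `ℝ^{m×m}_S`, (2) `|S̃| ≤ |S|`, and (3) for every `p` some
intersection of row and column slices of `S` equals `{p}`, then `L` is a permutation-scaling
matrix. -/
theorem sparsest_conjugation_is_permutation {Γ : Type*} (m : ℕ)
    (Λ : Γ → Matrix (Fin m) (Fin m) ℝ)
    (L : Matrix (Fin m) (Fin m) ℝ) (hL : IsUnit L)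
    (S St : Set (Fin m × Fin m))
    (hS : S = {p | ∃ γ, Λ γ p.1 p.2 ≠ 0})
    (hSt : St = {p | ∃ γ, (Lᵀ * Λ γ * L) p.1 p.2 ≠ 0})
    (hspan : ∀ M : Matrix (Fin m) (Fin m) ℝ,
        (M ∈ Submodule.span ℝ (Set.range Λ)) ↔ (∀ p : Fin m × Fin m, p ∉ S → M p.1 p.2 = 0))
    (hcard : St.ncard ≤ S.ncard)
    (hcrit : ∀ p : Fin m, ∃ I J : Set (Fin m),
        {q : Fin m | (∀ i ∈ I, (i, q) ∈ S) ∧ (∀ j ∈ J, (q, j) ∈ S)} = {p}) :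
    ∃ (σ : Equiv.Perm (Fin m)) (d : Fin m → ℝ), (∀ i, d i ≠ 0) ∧
      ∀ r i, L r i = if r = σ i then d i else 0 := by
  classical
  -- Step 1: permutation with nonzero entries
  obtain ⟨π, hπ⟩ : ∃ π : Equiv.Perm (Fin m), ∀ a, L (π a) a ≠ 0 := by
    have hdet : L.det ≠ 0 := (Matrix.isUnit_iff_isUnit_det L).mp hL |>.ne_zero
    rw [Matrix.det_apply] at hdet
    obtain ⟨π, -, hπ⟩ := Finset.exists_ne_zero_of_sum_ne_zero hdet
    refine ⟨π, ?_⟩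
    have hprod : (∏ i, L (π i) i) ≠ 0 := by
      intro h0; rw [h0, smul_zero] at hπ; exact hπ rfl
    exact fun a => Finset.prod_ne_zero_iff.mp hprod a (Finset.mem_univ a)
  -- span transfer: if all conjugated generators vanish at (a,b), so do all span elts
  have entry_lin : ∀ (a b : Fin m) (M : Matrix (Fin m) (Fin m) ℝ),
      M ∈ Submodule.span ℝ (Set.range Λ) → (∀ γ, (Lᵀ * Λ γ * L) a b = 0) →
      (Lᵀ * M * L) a b = 0 := by
    intro a b M hM h0
    induction hM using Submodule.span_induction with
    | mem x hx => obtain ⟨γ, rfl⟩ := hx; exact h0 γ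
    | zero => simp
    | add x y _ _ hx hy =>
        rw [Matrix.mul_add, Matrix.add_mul, Matrix.add_apply, hx, hy, add_zero]
    | smul c x _ hx =>
        rw [Matrix.mul_smul, Matrix.smul_mul, Matrix.smul_apply, hx, smul_zero]
  -- Step 2: membership in St from nonzero column entries
  have memSt : ∀ (a b i j : Fin m), L i a ≠ 0 → L j b ≠ 0 → (i, j) ∈ S → (a, b) ∈ St := by
    intro a b i j hia hjb hij
    rw [hSt]
    by_contra h
    simp only [Set.mem_setOf_eq, not_exists, not_not] at h
    set E : Matrix (Fin m) (Fin m) ℝ :=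
      Matrix.of (fun c d => (if c = i then (1:ℝ) else 0) * (if d = j then 1 else 0)) with hE
    have hEmem : E ∈ Submodule.span ℝ (Set.range Λ) := by
      rw [hspan]
      intro p hp
      have : ¬(p.1 = i ∧ p.2 = j) := by
        rintro ⟨h1, h2⟩
        exact hp (by rwa [← h1, ← h2, Prod.mk.eta] at hij)
      simp only [hE, Matrix.of_apply]
      rcases not_and_or.mp this with h' | h' <;> simp [h']
    have hval : (Lᵀ * E * L) a b = L i a * L j b := by
      simp [hE, Matrix.mul_apply, Matrix.transpose_apply, mul_ite, ite_mul, mul_zero, zero_mul,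
        mul_one, Finset.sum_ite_eq, Finset.sum_ite_eq', Finset.mul_sum, Finset.sum_mul]
    have := entry_lin a b E hEmem h
    rw [hval] at this
    exact (mul_ne_zero hia hjb) this
  -- Step 3: St = image of S under (π⁻¹, π⁻¹)
  have himg : (fun p : Fin m × Fin m => (π.symm p.1, π.symm p.2)) '' S = St := by
    have finj : Function.Injective (fun p : Fin m × Fin m => (π.symm p.1, π.symm p.2)) := by
      intro p q h
      simpa [Prod.ext_iff, π.symm.injective.eq_iff] using h
    have hsub : (fun p : Fin m × Fin m => (π.symm p.1, π.symm p.2)) '' S ⊆ St := by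
      rintro _ ⟨⟨i, j⟩, hij, rfl⟩
      exact memSt _ _ i j (by simpa using hπ (π.symm i)) (by simpa using hπ (π.symm j)) hij
    refine Set.eq_of_subset_of_ncard_le hsub ?_ (Set.toFinite _)
    rw [Set.ncard_image_of_injective S finj]
    exact hcard
  have hStS : ∀ a b : Fin m, (a, b) ∈ St → (π a, π b) ∈ S := by
    intro a b hab
    rw [← himg] at hab
    obtain ⟨⟨i, j⟩, hij, he⟩ := hab
    obtain ⟨h1, h2⟩ := Prod.mk.injEq .. ▸ he
    simp only at h1 h2
    rwa [← h1, ← h2, Equiv.apply_symm_apply, Equiv.apply_symm_apply]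
  -- Step 4: any nonzero entry in column a is at row π a
  have main : ∀ a q : Fin m, L q a ≠ 0 → q = π a := by
    intro a q hqa
    obtain ⟨I, J, hIJ⟩ := hcrit q
    have hq : q ∈ ({q} : Set (Fin m)) := rfl
    rw [← hIJ] at hq
    obtain ⟨hqI, hqJ⟩ := hq
    have hπa : π a ∈ {r : Fin m | (∀ i ∈ I, (i, r) ∈ S) ∧ (∀ j ∈ J, (r, j) ∈ S)} := by
      constructor
      · intro i hi
        have : (π.symm i, a) ∈ St :=
          memSt _ _ i q (by simpa using hπ (π.symm i)) hqa (hqI i hi)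
        have := hStS _ _ this
        rwa [Equiv.apply_symm_apply] at this
      · intro j hj
        have : (a, π.symm j) ∈ St :=
          memSt _ _ q j hqa (by simpa using hπ (π.symm j)) (hqJ j hj)
        have := hStS _ _ this
        rwa [Equiv.apply_symm_apply] at this
    rw [hIJ] at hπa
    exact (Set.mem_singleton_iff.mp hπa).symm
  -- Step 5: conclude
  refine ⟨π, fun a => L (π a) a, fun a => hπ a, fun r a => ?_⟩
  by_cases h : r = π a
  · simp [h]
  · simp only [h, if_false]
    by_contra hne
    exact h (main a r hne)
end

section
/- Let S ⊆ {1,...,m}×{1,...,n}, and let L be an invertible m×m matrix with sparsity pattern N. Suppose that (a) for all (i,j) ∈ S, N_{·,i} × {j} ⊆ S̃; (b) S̃ = σ(S) for a permutation σ of {1,...,m} with (σ(i),i) ∈ N for all i; and (c) for every p ∈ {1,...,m} there exists 𝒥 ⊆ {1,...,n} with ∩_{j∈𝒥} S_{·,j} = {p}. Then the columns of L have pairwise disjoint supports: for distinct i₁, i₂, N_{·,i₁} ∩ N_{·,i₂} = ∅. -/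
/-- Under (a) `N_{·,i} × {j} ⊆ S̃` for all `(i,j) ∈ S`, (b) `S̃ = σ(S)` for a permutation `σ`
with `(σ i, i) ∈ N`, and (c) the graphical criterion on `S`, the columns of `L` (with sparsity
pattern `N`) have pairwise disjoint supports. -/
theorem columns_disjoint_support (m n : ℕ) (L : Matrix (Fin m) (Fin m) ℝ) (hL : IsUnit L)
    (N : Set (Fin m × Fin m)) (hN : N = {p | L p.1 p.2 ≠ 0})
    (S St : Set (Fin m × Fin n))
    (σ : Equiv.Perm (Fin m)) (hσ : ∀ i, (σ i, i) ∈ N)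
    (ha : ∀ p ∈ S, ∀ r, (r, p.1) ∈ N → (r, p.2) ∈ St)
    (hb : St = (fun p : Fin m × Fin n => (σ p.1, p.2)) '' S)
    (hc : ∀ p : Fin m, ∃ J : Set (Fin n), {i : Fin m | ∀ j ∈ J, (i, j) ∈ S} = {p}) :
    ∀ i₁ i₂ : Fin m, i₁ ≠ i₂ → ∀ r, ¬((r, i₁) ∈ N ∧ (r, i₂) ∈ N) := by
  have key : ∀ r i, (r, i) ∈ N → r = σ i := by
    intro r i hri
    obtain ⟨J, hJ⟩ := hc i
    have hi : ∀ j ∈ J, (i, j) ∈ S := by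
      have : i ∈ {i' : Fin m | ∀ j ∈ J, (i', j) ∈ S} := by rw [hJ]; rfl
      exact this
    have hr : σ.symm r ∈ {i' : Fin m | ∀ j ∈ J, (i', j) ∈ S} := by
      intro j hj
      have hS := hi j hj
      have hSt := ha (i, j) hS r hri
      rw [hb] at hSt
      obtain ⟨q, hq, hqe⟩ := hSt
      have h1 : σ q.1 = r := congrArg Prod.fst hqe
      have h2 : q.2 = j := congrArg Prod.snd hqe
      have h3 : q.1 = σ.symm r := by rw [← h1]; simp
      rw [← h3, ← h2]
      exact hq
    rw [hJ] at hr
    have : σ.symm r = i := hr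
    rw [← this]; simp
  intro i₁ i₂ hne r ⟨h1, h2⟩
  exact hne (σ.injective ((key r i₁ h1).symm.trans (key r i₂ h2)))
end

section
/- Let μ₁, ν₁ be probability measures on ℝ^D, both concentrated on sets of Lebesgue measure zero, and let σ², σ̃² ≥ 0. If μ₁ * N(0, σ²I) = ν₁ * N(0, σ̃²I), then σ² = σ̃². -/
open MeasureTheory ProbabilityTheory

namespace GaussianVarIdentAux

open MeasureTheory Complex Metric Filter Real ProbabilityTheory
open scoped NNReal ENNReal Topology

lemma gauss1 (a : ℝ≥0) (t : ℝ) :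
    ∫ x : ℝ, cexp (((t * x : ℝ) : ℂ) * I) ∂(gaussianReal 0 a)
      = ((rexp (-((a : ℝ) * t ^ 2) / 2)) : ℂ) := by
  rcases eq_or_ne a 0 with rfl | ha
  · simp
  · have ha' : (0:ℝ) < (a:ℝ) := lt_of_le_of_ne (a.coe_nonneg) (by exact_mod_cast (Ne.symm ha))
    rw [gaussianReal_of_var_ne_zero 0 ha, gaussianPDF_def]
    have hmeas : Measurable fun x : ℝ => (gaussianPDFReal 0 a x).toNNReal :=
      (measurable_gaussianPDFReal 0 a).real_toNNReal
    have hh : (fun x : ℝ => ENNReal.ofReal (gaussianPDFReal 0 a x))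
        = fun x : ℝ => ((gaussianPDFReal 0 a x).toNNReal : ℝ≥0∞) := rfl
    rw [hh, integral_withDensity_eq_integral_smul hmeas]
    have hb : (0:ℝ) < (1 / (2 * (a:ℝ))) := by positivity
    have key := fourierIntegral_gaussian (b := ((1 / (2 * (a:ℝ)) : ℝ) : ℂ)) (by simpa using hb) (t : ℂ)
    have hsq : (0:ℝ) < √(2 * π * a) := Real.sqrt_pos.2 (by positivity)
    have hrw : ∀ x : ℝ, (gaussianPDFReal 0 a x).toNNReal • cexp (((t * x : ℝ) : ℂ) * I)
        = ((√(2 * π * a))⁻¹ : ℝ) * (cexp (I * (t:ℂ) * (x:ℂ)) * cexp (-((1 / (2 * (a:ℝ)) : ℝ) : ℂ) * (x:ℂ) ^ 2)) := by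
      intro x
      rw [NNReal.smul_def, Real.coe_toNNReal _ (gaussianPDFReal_nonneg 0 a x),
        gaussianPDFReal_def]
      simp only [sub_zero]
      rw [Complex.real_smul, Complex.ofReal_mul, Complex.ofReal_exp, mul_assoc,
        ← Complex.exp_add, ← Complex.exp_add]
      congr 2
      push_cast
      field_simp
      ring
    simp_rw [hrw]
    rw [integral_const_mul, key]
    have h2a : (0:ℝ) < 2 * π * a := by positivity
    have hpb : ((π : ℂ) / ((1 / (2 * (a:ℝ)) : ℝ) : ℂ)) = ((2 * π * (a:ℝ) : ℝ) : ℂ) := by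
      push_cast
      field_simp
    have hcp : ((2 * π * (a:ℝ) : ℝ) : ℂ) ^ (1 / 2 : ℂ) = ((√(2 * π * a) : ℝ) : ℂ) := by
      rw [show (1/2 : ℂ) = ((1/2 : ℝ) : ℂ) by norm_num, ← Complex.ofReal_cpow h2a.le,
        Real.sqrt_eq_rpow]
    rw [hpb, hcp, ← mul_assoc, ← Complex.ofReal_mul, inv_mul_cancel₀ hsq.ne', Complex.ofReal_one,
      one_mul]
    rw [show (-(t:ℂ) ^ 2 / (4 * ((1 / (2 * (a:ℝ)) : ℝ) : ℂ))) = ((-((a:ℝ) * t ^ 2) / 2 : ℝ) : ℂ) by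
      push_cast; field_simp; ring, ← Complex.ofReal_exp]

lemma gaussPi (D : ℕ) (a : ℝ≥0) (ξ : Fin D → ℝ) :
    ∫ w : Fin D → ℝ, cexp (((∑ j, ξ j * w j : ℝ) : ℂ) * I)
        ∂(Measure.pi fun _ : Fin D => gaussianReal 0 a)
      = ((rexp (-((a : ℝ) * ∑ j, (ξ j) ^ 2) / 2)) : ℂ) := by
  letI : MeasureSpace ℝ := ⟨gaussianReal 0 a⟩
  have hvol : (Measure.pi fun _ : Fin D => gaussianReal 0 a) = (volume : Measure (Fin D → ℝ)) :=
    (volume_pi).symm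
  haveI : SigmaFinite (volume : Measure ℝ) := by
    change SigmaFinite (gaussianReal 0 a); infer_instance
  rw [hvol]
  have hint : ∀ w : Fin D → ℝ, cexp (((∑ j, ξ j * w j : ℝ) : ℂ) * I)
      = ∏ j, cexp (((ξ j * w j : ℝ) : ℂ) * I) := by
    intro w
    rw [← Complex.exp_sum]
    congr 1
    push_cast
    rw [Finset.sum_mul]
  simp_rw [hint]
  rw [volume_pi, MeasureTheory.integral_fintype_prod_eq_prod
    (f := fun j (x : ℝ) => cexp (((ξ j * x : ℝ) : ℂ) * I))]
  have : ∀ j, ∫ x : ℝ, cexp (((ξ j * x : ℝ) : ℂ) * I) ∂volume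
      = ((rexp (-((a : ℝ) * (ξ j) ^ 2) / 2)) : ℂ) := fun j => gauss1 a (ξ j)
  simp_rw [this, ← Complex.ofReal_prod, ← Real.exp_sum]
  congr 2
  rw [Finset.mul_sum, neg_div, ← Finset.sum_div, Finset.sum_neg_distrib]
  simp [neg_div]

noncomputable def cf {D : ℕ} (m : Measure (Fin D → ℝ)) (ξ : Fin D → ℝ) : ℂ :=
  ∫ x, cexp (((∑ j, ξ j * x j : ℝ) : ℂ) * I) ∂m

lemma cf_norm_le_one {D : ℕ} (m : Measure (Fin D → ℝ)) [IsProbabilityMeasure m]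
    (ξ : Fin D → ℝ) : ‖cf m ξ‖ ≤ 1 := by
  refine le_trans (norm_integral_le_of_norm_le_const (C := 1) ?_) (by simp)
  filter_upwards with x
  rw [Complex.norm_exp_ofReal_mul_I]

lemma cf_continuous_aux {D : ℕ} (ξ : Fin D → ℝ) :
    Continuous fun x : Fin D → ℝ => cexp (((∑ j, ξ j * x j : ℝ) : ℂ) * I) := by
  fun_prop

lemma cf_conv {D : ℕ} (m : Measure (Fin D → ℝ)) [IsProbabilityMeasure m] (a : ℝ≥0)
    (ξ : Fin D → ℝ) :
    cf (m.conv (Measure.pi fun _ : Fin D => gaussianReal 0 a)) ξ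
      = cf m ξ * ((rexp (-((a : ℝ) * ∑ j, (ξ j) ^ 2) / 2)) : ℂ) := by
  set G := Measure.pi fun _ : Fin D => gaussianReal 0 a with hG
  haveI : IsProbabilityMeasure G := by rw [hG]; infer_instance
  have hconv : m.conv G = Measure.map (fun p : (Fin D → ℝ) × (Fin D → ℝ) => p.1 + p.2) (m.prod G) := rfl
  rw [cf, hconv, integral_map]
  · have : ∀ p : (Fin D → ℝ) × (Fin D → ℝ),
        cexp (((∑ j, ξ j * (p.1 + p.2) j : ℝ) : ℂ) * I)
          = cexp (((∑ j, ξ j * p.1 j : ℝ) : ℂ) * I) * cexp (((∑ j, ξ j * p.2 j : ℝ) : ℂ) * I) := by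
      intro p
      rw [← Complex.exp_add]
      congr 1
      push_cast
      rw [← add_mul]
      congr 1
      rw [← Finset.sum_add_distrib]
      push_cast
      congr 1
      ext j
      simp [Pi.add_apply]
      ring
    simp_rw [this]
    rw [MeasureTheory.integral_prod_mul (μ := m) (ν := G)
      (f := fun x => cexp (((∑ j, ξ j * x j : ℝ) : ℂ) * I))
      (g := fun y => cexp (((∑ j, ξ j * y j : ℝ) : ℂ) * I))]
    rw [hG, gaussPi]
    rfl
  · exact (measurable_fst.add measurable_snd).aemeasurable
  · exact (cf_continuous_aux ξ).aestronglyMeasurable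

lemma integrable_exp_sq {D : ℕ} {u : ℝ} (hu : 0 < u) :
    Integrable (fun ξ : Fin D → ℝ => rexp (-u * ∑ j, (ξ j) ^ 2)) volume := by
  have : (fun ξ : Fin D → ℝ => rexp (-u * ∑ j, (ξ j) ^ 2))
      = fun ξ : Fin D → ℝ => ∏ j, rexp (-u * (ξ j) ^ 2) := by
    ext ξ
    rw [← Real.exp_sum, Finset.mul_sum]
  rw [this]
  exact MeasureTheory.Integrable.fintype_prod (f := fun _ (t : ℝ) => rexp (-u * t ^ 2))
    (fun _ => integrable_exp_neg_mul_sq hu)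

lemma key {D : ℕ} (m : Measure (Fin D → ℝ)) [IsProbabilityMeasure m] {u : ℝ} (hu : 0 < u) :
    ∫ ξ : Fin D → ℝ, Complex.normSq (cf m ξ) * rexp (-u * ∑ j, (ξ j) ^ 2)
      = ((π / u) ^ ((D : ℝ) / 2)) *
        ∫ p : (Fin D → ℝ) × (Fin D → ℝ),
          rexp (-(∑ j, (p.1 j - p.2 j) ^ 2) / (4 * u)) ∂(m.prod m) := by
  classical
  set P : Measure ((Fin D → ℝ) × (Fin D → ℝ)) := m.prod m with hP
  haveI : IsProbabilityMeasure P := by rw [hP]; infer_instance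
  set S : (Fin D → ℝ) → ℝ := fun ξ => ∑ j, (ξ j) ^ 2 with hS
  set F : (Fin D → ℝ) → (Fin D → ℝ) × (Fin D → ℝ) → ℂ := fun ξ p =>
    cexp (((∑ j, ξ j * (p.1 j - p.2 j) : ℝ) : ℂ) * I) * cexp (-(u : ℂ) * ((S ξ : ℝ) : ℂ)) with hF
  have hnormF : ∀ ξ p, ‖F ξ p‖ = rexp (-u * S ξ) := by
    intro ξ p
    rw [hF]
    simp only [norm_mul, Complex.norm_exp_ofReal_mul_I, one_mul,
      Complex.norm_exp]
    congr 1
    simp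
  have hFcont : Continuous (Function.uncurry F) := by
    unfold Function.uncurry
    rw [hF, hS]
    fun_prop
  -- integrability on the product
  have hint : Integrable (Function.uncurry F) (volume.prod P) := by
    rw [MeasureTheory.integrable_prod_iff hFcont.aestronglyMeasurable]
    constructor
    · filter_upwards with ξ
      have : Continuous (F ξ) := by rw [hF]; fun_prop
      refine (integrable_const (rexp (-u * S ξ))).mono' this.aestronglyMeasurable ?_
      filter_upwards with p
      simpa [Function.uncurry] using (hnormF ξ p).le
    · have hfun : (fun ξ => ∫ p, ‖Function.uncurry F (ξ, p)‖ ∂P) = fun ξ => rexp (-u * S ξ) := by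
        ext ξ
        simp only [Function.uncurry_apply_pair]
        simp_rw [hnormF]
        simp
      rw [hfun, hS]
      exact integrable_exp_sq hu
  -- step A : inner integral over P
  have hA : ∀ ξ, (∫ p, F ξ p ∂P) = ((Complex.normSq (cf m ξ) * rexp (-u * S ξ) : ℝ) : ℂ) := by
    intro ξ
    have h1 : ∀ p : (Fin D → ℝ) × (Fin D → ℝ),
        cexp (((∑ j, ξ j * (p.1 j - p.2 j) : ℝ) : ℂ) * I)
          = cexp (((∑ j, ξ j * p.1 j : ℝ) : ℂ) * I)
            * cexp (((∑ j, ξ j * p.2 j : ℝ) : ℂ) * (-I)) := by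
      intro p
      rw [← Complex.exp_add]
      congr 1
      have : (∑ j, ξ j * (p.1 j - p.2 j)) = (∑ j, ξ j * p.1 j) - ∑ j, ξ j * p.2 j := by
        rw [← Finset.sum_sub_distrib]
        congr 1; ext j; ring
      rw [this]
      push_cast
      ring
    rw [hF]
    simp only []
    simp_rw [h1]
    rw [integral_mul_const]
    rw [MeasureTheory.integral_prod_mul (μ := m) (ν := m)
      (f := fun x => cexp (((∑ j, ξ j * x j : ℝ) : ℂ) * I))
      (g := fun y => cexp (((∑ j, ξ j * y j : ℝ) : ℂ) * (-I)))]
    have hconj : (∫ y, cexp (((∑ j, ξ j * y j : ℝ) : ℂ) * (-I)) ∂m)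
        = (starRingEnd ℂ) (cf m ξ) := by
      rw [cf, ← integral_conj]
      congr 1
      ext y
      rw [← Complex.exp_conj]
      congr 1
      simp
    rw [hconj, cf]
    rw [Complex.mul_conj]
    rw [show (-(u : ℂ) * ((S ξ : ℝ) : ℂ)) = ((-u * S ξ : ℝ) : ℂ) by push_cast; ring,
      ← Complex.ofReal_exp, ← Complex.ofReal_mul]
  -- step B : inner integral over ξ
  have hB : ∀ p : (Fin D → ℝ) × (Fin D → ℝ), (∫ ξ, F ξ p) =
      ((((π / u) ^ ((D : ℝ) / 2)) * rexp (-(∑ j, (p.1 j - p.2 j) ^ 2) / (4 * u)) : ℝ) : ℂ) := by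
    intro p
    have hbre : (0 : ℝ) < ((u : ℂ)).re := by simpa using hu
    have hgft := GaussianFourier.integral_cexp_neg_mul_sum_add (b := (u : ℂ)) hbre
      (fun j => ((p.1 j - p.2 j : ℝ) : ℂ) * I)
    have heq : ∀ ξ : Fin D → ℝ, F ξ p
        = cexp (-(u:ℂ) * ∑ j, ((ξ j : ℝ) : ℂ) ^ 2 + ∑ j, (((p.1 j - p.2 j : ℝ) : ℂ) * I) * (ξ j : ℂ)) := by
      intro ξ
      rw [hF]
      simp only []
      rw [← Complex.exp_add]
      congr 1
      rw [add_comm]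
      congr 1
      · rw [hS]; push_cast; ring
      · push_cast
        rw [Finset.sum_mul]
        exact Finset.sum_congr rfl fun j _ => by ring
    simp_rw [heq]
    rw [Fintype.card_fin] at hgft
    rw [hgft]
    have hc2 : (∑ j, ((((p.1 j - p.2 j : ℝ) : ℂ)) * I) ^ 2)
        = -((∑ j, (p.1 j - p.2 j) ^ 2 : ℝ) : ℂ) := by
      push_cast
      rw [← Finset.sum_neg_distrib]
      congr 1; ext j
      rw [mul_pow, Complex.I_sq]
      ring
    rw [hc2]
    have hcp : ((π : ℂ) / (u : ℂ)) ^ (((D : ℕ) : ℂ) / 2) = (((π / u) ^ ((D : ℝ) / 2) : ℝ) : ℂ) := by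
      have hpu : (0:ℝ) ≤ π / u := by positivity
      rw [← Complex.ofReal_div,
        show (((D : ℕ) : ℂ) / 2) = (((D : ℝ) / 2 : ℝ) : ℂ) by push_cast; ring]
      exact (Complex.ofReal_cpow hpu _).symm
    rw [hcp]
    have hexp : cexp (-((∑ j, (p.1 j - p.2 j) ^ 2 : ℝ) : ℂ) / (4 * (u:ℂ)))
        = ((rexp (-(∑ j, (p.1 j - p.2 j) ^ 2) / (4 * u)) : ℝ) : ℂ) := by
      rw [show (-((∑ j, (p.1 j - p.2 j) ^ 2 : ℝ) : ℂ) / (4 * (u:ℂ)))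
          = ((-(∑ j, (p.1 j - p.2 j) ^ 2) / (4 * u) : ℝ) : ℂ) by push_cast; ring,
        ← Complex.ofReal_exp]
    rw [hexp, ← Complex.ofReal_mul]
  -- swap
  have hswap := MeasureTheory.integral_integral_swap (f := F) hint
  calc ∫ ξ : Fin D → ℝ, Complex.normSq (cf m ξ) * rexp (-u * ∑ j, (ξ j) ^ 2)
      = ∫ ξ : Fin D → ℝ, Complex.normSq (cf m ξ) * rexp (-u * S ξ) := by rw [hS]
    _ = _ := by
      have e1 : ((∫ ξ : Fin D → ℝ, Complex.normSq (cf m ξ) * rexp (-u * S ξ) : ℝ) : ℂ)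
          = ((((π / u) ^ ((D : ℝ) / 2)) *
              ∫ p, rexp (-(∑ j, (p.1 j - p.2 j) ^ 2) / (4 * u)) ∂P : ℝ) : ℂ) := by
        calc ((∫ ξ : Fin D → ℝ, Complex.normSq (cf m ξ) * rexp (-u * S ξ) : ℝ) : ℂ)
            = ∫ ξ : Fin D → ℝ, ((Complex.normSq (cf m ξ) * rexp (-u * S ξ) : ℝ) : ℂ) :=
              (integral_ofReal (f := fun ξ : Fin D → ℝ =>
                Complex.normSq (cf m ξ) * rexp (-u * S ξ))).symm
          _ = ∫ ξ : Fin D → ℝ, ∫ p, F ξ p ∂P :=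
              integral_congr_ae (Filter.Eventually.of_forall fun ξ => (hA ξ).symm)
          _ = ∫ p : (Fin D → ℝ) × (Fin D → ℝ), (∫ ξ : Fin D → ℝ, F ξ p) ∂P := hswap
          _ = ∫ p : (Fin D → ℝ) × (Fin D → ℝ), ((((π / u) ^ ((D : ℝ) / 2)) *
                rexp (-(∑ j, (p.1 j - p.2 j) ^ 2) / (4 * u)) : ℝ) : ℂ) ∂P :=
              integral_congr_ae (Filter.Eventually.of_forall fun p => hB p)
          _ = ((∫ p, ((π / u) ^ ((D : ℝ) / 2)) *
                rexp (-(∑ j, (p.1 j - p.2 j) ^ 2) / (4 * u)) ∂P : ℝ) : ℂ) := integral_ofReal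
          _ = _ := by
              rw [integral_const_mul]
      exact_mod_cast e1

lemma lower_bound {D : ℕ} (m : Measure (Fin D → ℝ)) [IsProbabilityMeasure m] {r : ℝ}
    (hr : 0 < r) :
    rexp (-(D : ℝ) / 4) * (∫⁻ x, m (closedBall x r) ∂m).toReal
      ≤ ∫ p : (Fin D → ℝ) × (Fin D → ℝ),
          rexp (-(∑ j, (p.1 j - p.2 j) ^ 2) / (4 * r ^ 2)) ∂(m.prod m) := by
  classical
  set P : Measure ((Fin D → ℝ) × (Fin D → ℝ)) := m.prod m with hP
  haveI : IsProbabilityMeasure P := by rw [hP]; infer_instance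
  set A : Set ((Fin D → ℝ) × (Fin D → ℝ)) := {p | dist p.2 p.1 ≤ r} with hA
  have hAmeas : MeasurableSet A := by
    have : IsClosed A := isClosed_le (by fun_prop) continuous_const
    exact this.measurableSet
  have hPA : P A = ∫⁻ x, m (closedBall x r) ∂m := by
    rw [hP, Measure.prod_apply hAmeas]
    rfl
  have hker : ∀ p : (Fin D → ℝ) × (Fin D → ℝ),
      A.indicator (fun _ => rexp (-(D : ℝ) / 4)) p
        ≤ rexp (-(∑ j, (p.1 j - p.2 j) ^ 2) / (4 * r ^ 2)) := by
    intro p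
    by_cases hp : p ∈ A
    · rw [Set.indicator_of_mem hp]
      apply Real.exp_le_exp.2
      rw [div_le_div_iff₀ (by norm_num) (by positivity), neg_mul, neg_mul, neg_le_neg_iff]
      have hS : (∑ j, (p.1 j - p.2 j) ^ 2) ≤ (D : ℝ) * r ^ 2 := by
        have : ∀ j, (p.1 j - p.2 j) ^ 2 ≤ r ^ 2 := by
          intro j
          have h1 : dist (p.2 j) (p.1 j) ≤ dist p.2 p.1 := dist_le_pi_dist p.2 p.1 j
          have h2 : dist (p.2 j) (p.1 j) ≤ r := h1.trans hp
          have h3 : (p.1 j - p.2 j) ^ 2 = (dist (p.2 j) (p.1 j)) ^ 2 := by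
            rw [Real.dist_eq, _root_.sq_abs]
            ring
          rw [h3]
          exact pow_le_pow_left₀ dist_nonneg h2 2
        calc (∑ j, (p.1 j - p.2 j) ^ 2) ≤ ∑ _j : Fin D, r ^ 2 :=
              Finset.sum_le_sum fun j _ => this j
          _ = (D : ℝ) * r ^ 2 := by simp
      calc (∑ j, (p.1 j - p.2 j) ^ 2) * 4 ≤ ((D : ℝ) * r ^ 2) * 4 := by nlinarith
        _ = (D : ℝ) * (4 * r ^ 2) := by ring
    · rw [Set.indicator_of_notMem hp]
      positivity
  have hInt : Integrable (fun p : (Fin D → ℝ) × (Fin D → ℝ) =>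
      rexp (-(∑ j, (p.1 j - p.2 j) ^ 2) / (4 * r ^ 2))) P := by
    refine (integrable_const (1 : ℝ)).mono' ?_ ?_
    · apply Continuous.aestronglyMeasurable
      fun_prop
    · filter_upwards with p
      rw [Real.norm_eq_abs, _root_.abs_of_nonneg (Real.exp_pos _).le]
      apply Real.exp_le_one_iff.2
      apply div_nonpos_of_nonpos_of_nonneg
      · simp only [neg_nonpos]
        exact Finset.sum_nonneg fun j _ => sq_nonneg _
      · positivity
  have hmono := integral_mono_of_nonneg
    (f := A.indicator (fun _ => rexp (-(D : ℝ) / 4)))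
    (g := fun p : (Fin D → ℝ) × (Fin D → ℝ) =>
      rexp (-(∑ j, (p.1 j - p.2 j) ^ 2) / (4 * r ^ 2))) (μ := P)
    (Filter.Eventually.of_forall fun p => Set.indicator_nonneg
      (fun _ _ => (Real.exp_pos _).le) p)
    hInt (Filter.Eventually.of_forall hker)
  rw [integral_indicator_const _ hAmeas, measureReal_def, hPA] at hmono
  rw [smul_eq_mul, mul_comm] at hmono
  exact hmono

lemma measurable_ball_fun {D : ℕ} (m : Measure (Fin D → ℝ)) [IsProbabilityMeasure m] (r : ℝ) :
    Measurable fun x : Fin D → ℝ => m (closedBall x r) := by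
  have hAmeas : MeasurableSet {p : (Fin D → ℝ) × (Fin D → ℝ) | dist p.2 p.1 ≤ r} :=
    (isClosed_le (by fun_prop) continuous_const).measurableSet
  exact measurable_measure_prodMk_left hAmeas

lemma blowup {D : ℕ} (m : Measure (Fin D → ℝ)) [IsProbabilityMeasure m]
    (s : Set (Fin D → ℝ)) (hs : volume s = 0) (hm : m sᶜ = 0) {C : ℝ}
    (hC : ∀ r : ℝ, 0 < r → ∫⁻ x, m (closedBall x r) ∂m ≤ ENNReal.ofReal (C * r ^ D)) :
    False := by
  classical
  set s' : Set (Fin D → ℝ) := toMeasurable volume s with hs'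
  have hs'meas : MeasurableSet s' := measurableSet_toMeasurable _ _
  have hs'vol : volume s' = 0 := by rw [hs', measure_toMeasurable]; exact hs
  have hm' : m s'ᶜ = 0 :=
    measure_mono_null (Set.compl_subset_compl.2 (subset_toMeasurable _ _)) hm
  have hrn : (volume.rnDeriv m) =ᵐ[m] 0 := by
    have hle := Measure.withDensity_rnDeriv_le volume m
    have h0 : ∫⁻ x in s', volume.rnDeriv m x ∂m = 0 := by
      refine le_antisymm ?_ (zero_le)
      calc ∫⁻ x in s', volume.rnDeriv m x ∂m = (m.withDensity (volume.rnDeriv m)) s' :=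
            (withDensity_apply _ hs'meas).symm
        _ ≤ volume s' := hle s'
        _ = 0 := hs'vol
    have h1 : (volume.rnDeriv m) =ᵐ[m.restrict s'] 0 :=
      (lintegral_eq_zero_iff (Measure.measurable_rnDeriv volume m)).1 h0
    rw [Filter.EventuallyEq, ae_restrict_iff' hs'meas] at h1
    have hmem : ∀ᵐ x ∂m, x ∈ s' := by
      rw [ae_iff]
      exact hm'
    filter_upwards [h1, hmem] with x hx hx'
    exact hx hx'
  have hbes := Besicovitch.ae_tendsto_rnDeriv volume m
  set κ : ℝ≥0∞ := volume (closedBall (0 : Fin D → ℝ) 1) with hκ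
  have hκ0 : κ ≠ 0 := (measure_closedBall_pos volume _ one_pos).ne'
  have hκtop : κ ≠ ∞ := measure_closedBall_lt_top.ne
  have hvolball : ∀ (x : Fin D → ℝ) (r : ℝ), 0 < r →
      volume (closedBall x r) = ENNReal.ofReal (r ^ D) * κ := by
    intro x r hr
    rw [Measure.addHaar_closedBall' volume x hr.le]
    congr 2
    rw [Module.finrank_pi ℝ, Fintype.card_fin]
  set R : ℕ → ℝ := fun n => 1 / (n + 1) with hR
  have hRpos : ∀ n, 0 < R n := fun n => by positivity
  have hRtend : Tendsto R atTop (𝓝[>] (0:ℝ)) := by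
    rw [tendsto_nhdsWithin_iff]
    exact ⟨tendsto_one_div_add_atTop_nhds_zero_nat,
      Filter.Eventually.of_forall fun n => hRpos n⟩
  set g : ℕ → (Fin D → ℝ) → ℝ≥0∞ :=
    fun n x => m (closedBall x (R n)) * (ENNReal.ofReal ((R n) ^ D))⁻¹ with hg
  have hgmeas : ∀ n, Measurable (g n) := fun n =>
    (measurable_ball_fun m (R n)).mul_const _
  have hoR0 : ∀ n, ENNReal.ofReal ((R n) ^ D) ≠ 0 := by
    intro n
    simp only [ne_eq, ENNReal.ofReal_eq_zero, not_le]
    have := hRpos n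
    positivity
  have hoRtop : ∀ n, ENNReal.ofReal ((R n) ^ D) ≠ ∞ := fun n => ENNReal.ofReal_ne_top
  have hblow : ∀ᵐ x ∂m, Tendsto (fun n => g n x) atTop (𝓝 ∞) := by
    filter_upwards [hbes, hrn] with x hx hx0
    have hx' : Tendsto (fun r => volume (closedBall x r) / m (closedBall x r)) (𝓝[>] 0)
        (𝓝 0) := by
      rw [hx0] at hx
      simpa using hx
    have hratio : Tendsto (fun n => volume (closedBall x (R n)) / m (closedBall x (R n)))
        atTop (𝓝 0) := hx'.comp hRtend
    have hinv : Tendsto (fun n => (volume (closedBall x (R n)) / m (closedBall x (R n)))⁻¹)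
        atTop (𝓝 ∞) := by
      have := ENNReal.tendsto_inv_iff.2 hratio
      simpa using this
    have heq : ∀ n, g n x
        = κ * (volume (closedBall x (R n)) / m (closedBall x (R n)))⁻¹ := by
      intro n
      have hmtop : m (closedBall x (R n)) ≠ ∞ := (measure_lt_top m _).ne
      rw [hvolball x (R n) (hRpos n)]
      rw [ENNReal.inv_div (Or.inl hmtop) (Or.inr (mul_ne_zero (hoR0 n) hκ0))]
      rw [div_eq_mul_inv, ENNReal.mul_inv (Or.inl (hoR0 n)) (Or.inl (hoRtop n))]
      rw [hg]
      simp only []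
      rw [show κ * (m (closedBall x (R n)) * ((ENNReal.ofReal ((R n) ^ D))⁻¹ * κ⁻¹))
          = (κ * κ⁻¹) * (m (closedBall x (R n)) * (ENNReal.ofReal ((R n) ^ D))⁻¹) by ring,
        ENNReal.mul_inv_cancel hκ0 hκtop, one_mul]
    have hfin : Tendsto (fun n => κ * (volume (closedBall x (R n)) / m (closedBall x (R n)))⁻¹)
        atTop (𝓝 (κ * ∞)) := ENNReal.Tendsto.const_mul hinv (Or.inr hκtop)
    rw [ENNReal.mul_top hκ0] at hfin
    simp_rw [heq]
    exact hfin
  -- Fatou contradiction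
  have hliminf : ∀ᵐ x ∂m, Filter.liminf (fun n => g n x) atTop = ∞ := by
    filter_upwards [hblow] with x hx
    exact hx.liminf_eq
  have htop : ∫⁻ x, Filter.liminf (fun n => g n x) atTop ∂m = ∞ := by
    rw [lintegral_congr_ae hliminf]
    simp
  have hfatou := MeasureTheory.lintegral_liminf_le hgmeas (μ := m) (u := atTop)
  have hbound : ∀ n, ∫⁻ x, g n x ∂m ≤ ENNReal.ofReal C := by
    intro n
    rw [hg]
    simp only []
    rw [lintegral_mul_const _ (measurable_ball_fun m (R n))]
    calc (∫⁻ x, m (closedBall x (R n)) ∂m) * (ENNReal.ofReal ((R n) ^ D))⁻¹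
        ≤ ENNReal.ofReal (C * (R n) ^ D) * (ENNReal.ofReal ((R n) ^ D))⁻¹ := by
          gcongr
          exact hC (R n) (hRpos n)
      _ = ENNReal.ofReal C * (ENNReal.ofReal ((R n) ^ D) * (ENNReal.ofReal ((R n) ^ D))⁻¹) := by
          rw [ENNReal.ofReal_mul' (by positivity : (0:ℝ) ≤ (R n) ^ D), mul_assoc]
      _ = ENNReal.ofReal C := by
          rw [ENNReal.mul_inv_cancel (hoR0 n) (hoRtop n), mul_one]
  have hlim_le : Filter.liminf (fun n => ∫⁻ x, g n x ∂m) atTop ≤ ENNReal.ofReal C :=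
    Filter.liminf_le_of_frequently_le (Filter.Frequently.of_forall hbound)
  have : (∞ : ℝ≥0∞) ≤ ENNReal.ofReal C := by
    calc (∞ : ℝ≥0∞) = ∫⁻ x, Filter.liminf (fun n => g n x) atTop ∂m := htop.symm
      _ ≤ Filter.liminf (fun n => ∫⁻ x, g n x ∂m) atTop := hfatou
      _ ≤ ENNReal.ofReal C := hlim_le
  exact (ENNReal.ofReal_lt_top.trans_le this).false

lemma aux {D : ℕ} (μ₁ ν₁ : Measure (Fin D → ℝ))
    [IsProbabilityMeasure μ₁] [IsProbabilityMeasure ν₁]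
    (s : Set (Fin D → ℝ)) (hs : volume s = 0) (hμ : μ₁ sᶜ = 0)
    (v vt : ℝ≥0) (hlt : v < vt)
    (h : μ₁.conv (Measure.pi fun _ : Fin D => gaussianReal 0 v)
       = ν₁.conv (Measure.pi fun _ : Fin D => gaussianReal 0 vt)) : False := by
  classical
  set c : ℝ := (vt : ℝ) - (v : ℝ) with hc
  have hcpos : 0 < c := by
    rw [hc]
    have : (v : ℝ) < vt := by exact_mod_cast hlt
    linarith
  have hcf : ∀ ξ : Fin D → ℝ,
      cf μ₁ ξ * ((rexp (-((v : ℝ) * ∑ j, (ξ j) ^ 2) / 2)) : ℂ)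
        = cf ν₁ ξ * ((rexp (-((vt : ℝ) * ∑ j, (ξ j) ^ 2) / 2)) : ℂ) := by
    intro ξ
    rw [← cf_conv μ₁ v ξ, ← cf_conv ν₁ vt ξ, h]
  have hφ : ∀ ξ : Fin D → ℝ,
      cf μ₁ ξ = cf ν₁ ξ * ((rexp (-(c * ∑ j, (ξ j) ^ 2) / 2)) : ℂ) := by
    intro ξ
    have hne : ((rexp (-((v : ℝ) * ∑ j, (ξ j) ^ 2) / 2) : ℝ) : ℂ) ≠ 0 := by
      exact_mod_cast (Real.exp_pos _).ne'
    apply mul_right_cancel₀ hne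
    rw [hcf ξ, mul_assoc, ← Complex.ofReal_mul, ← Real.exp_add]
    congr 3
    rw [hc]
    ring
  have hbnd : ∀ ξ : Fin D → ℝ,
      Complex.normSq (cf μ₁ ξ) ≤ rexp (-c * ∑ j, (ξ j) ^ 2) := by
    intro ξ
    rw [hφ ξ, Complex.normSq_mul, Complex.normSq_ofReal]
    have h1 : Complex.normSq (cf ν₁ ξ) ≤ 1 := by
      rw [Complex.normSq_eq_norm_sq]
      have h2 := cf_norm_le_one ν₁ ξ
      nlinarith [norm_nonneg (cf ν₁ ξ)]
    calc Complex.normSq (cf ν₁ ξ) * (rexp (-(c * ∑ j, (ξ j) ^ 2) / 2)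
            * rexp (-(c * ∑ j, (ξ j) ^ 2) / 2))
        ≤ 1 * (rexp (-(c * ∑ j, (ξ j) ^ 2) / 2) * rexp (-(c * ∑ j, (ξ j) ^ 2) / 2)) := by
          apply mul_le_mul_of_nonneg_right h1
          positivity
      _ = rexp (-c * ∑ j, (ξ j) ^ 2) := by
          rw [one_mul, ← Real.exp_add]
          congr 1
          ring
  set B : ℝ := ∫ ξ : Fin D → ℝ, rexp (-c * ∑ j, (ξ j) ^ 2) with hB
  have hupper : ∀ u : ℝ, 0 < u →
      ∫ ξ : Fin D → ℝ, Complex.normSq (cf μ₁ ξ) * rexp (-u * ∑ j, (ξ j) ^ 2) ≤ B := by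
    intro u hu
    apply integral_mono_of_nonneg
    · filter_upwards with ξ
      have := Complex.normSq_nonneg (cf μ₁ ξ)
      positivity
    · exact integrable_exp_sq hcpos
    · filter_upwards with ξ
      have hS : (0:ℝ) ≤ ∑ j, (ξ j) ^ 2 := Finset.sum_nonneg fun j _ => sq_nonneg _
      calc Complex.normSq (cf μ₁ ξ) * rexp (-u * ∑ j, (ξ j) ^ 2)
          ≤ rexp (-c * ∑ j, (ξ j) ^ 2) * 1 := by
            apply mul_le_mul (hbnd ξ) _ (Real.exp_pos _).le (Real.exp_pos _).le
            apply Real.exp_le_one_iff.2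
            have : (0:ℝ) ≤ u * ∑ j, (ξ j) ^ 2 := by positivity
            linarith
        _ = rexp (-c * ∑ j, (ξ j) ^ 2) := mul_one _
  set a : ℝ := (D : ℝ) / 2 with ha
  set C0 : ℝ := rexp ((D : ℝ) / 4) * B * ((π : ℝ) ^ a)⁻¹ with hC0
  refine blowup μ₁ s hs hμ (C := C0) ?_
  intro r hr
  have hu : (0:ℝ) < r ^ 2 := by positivity
  have hkey := key μ₁ (u := r ^ 2) hu
  have hc1 : (0:ℝ) < (π / r ^ 2) ^ a := Real.rpow_pos_of_pos (by positivity) a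
  set Ju : ℝ := ∫ p : (Fin D → ℝ) × (Fin D → ℝ),
      rexp (-(∑ j, (p.1 j - p.2 j) ^ 2) / (4 * r ^ 2)) ∂(μ₁.prod μ₁) with hJu
  have hJle : Ju ≤ B / ((π / r ^ 2) ^ a) := by
    rw [le_div_iff₀ hc1]
    have := hupper (r ^ 2) hu
    rw [hkey] at this
    linarith [this]
  set T : ℝ := (∫⁻ x, μ₁ (closedBall x r) ∂μ₁).toReal with hT
  have hlow : rexp (-(D : ℝ) / 4) * T ≤ Ju := lower_bound μ₁ hr
  have hTnonneg : 0 ≤ T := ENNReal.toReal_nonneg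
  have hee : rexp ((D : ℝ) / 4) * rexp (-(D : ℝ) / 4) = 1 := by
    rw [← Real.exp_add, show (D:ℝ)/4 + -(D:ℝ)/4 = 0 by ring, Real.exp_zero]
  have h5 : T ≤ rexp ((D : ℝ) / 4) * (B / ((π / r ^ 2) ^ a)) := by
    nlinarith [mul_le_mul_of_nonneg_left (hlow.trans hJle) (Real.exp_pos ((D : ℝ) / 4)).le]
  have h6 : rexp ((D : ℝ) / 4) * (B / ((π / r ^ 2) ^ a)) = C0 * r ^ D := by
    have e1 : ((π / r ^ 2 : ℝ) ^ a)⁻¹ = (r ^ 2 / π : ℝ) ^ a := by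
      rw [← Real.inv_rpow (by positivity), inv_div]
    have e2 : ((r ^ 2 / π : ℝ)) ^ a = ((r ^ 2 : ℝ) ^ a) / (π : ℝ) ^ a :=
      Real.div_rpow (by positivity) pi_pos.le a
    have e3 : ((r ^ 2 : ℝ)) ^ a = r ^ D := by
      rw [← Real.rpow_natCast r 2, ← Real.rpow_mul hr.le, ha]
      rw [show ((2:ℕ):ℝ) * ((D:ℝ)/2) = (D:ℝ) by push_cast; ring]
      rw [Real.rpow_natCast]
    rw [div_eq_mul_inv B, e1, e2, e3, hC0]
    field_simp
  rw [h6] at h5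
  have hLfin : (∫⁻ x, μ₁ (closedBall x r) ∂μ₁) ≠ ∞ := by
    have hle : (∫⁻ x, μ₁ (closedBall x r) ∂μ₁) ≤ 1 := by
      calc (∫⁻ x, μ₁ (closedBall x r) ∂μ₁) ≤ ∫⁻ _x, 1 ∂μ₁ :=
            lintegral_mono fun x => prob_le_one
        _ = 1 := by simp
    exact (hle.trans_lt ENNReal.one_lt_top).ne
  calc (∫⁻ x, μ₁ (closedBall x r) ∂μ₁) = ENNReal.ofReal T := by
        rw [hT, ENNReal.ofReal_toReal hLfin]
    _ ≤ ENNReal.ofReal (C0 * r ^ D) := ENNReal.ofReal_le_ofReal h5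

end GaussianVarIdentAux

open MeasureTheory ProbabilityTheory in
/-- If `μ₁` and `ν₁` are both concentrated on Lebesgue-null sets and
`μ₁ * N(0, σ²I) = ν₁ * N(0, σ̃²I)`, then `σ² = σ̃²`. -/
theorem gaussian_variance_identifiable (D : ℕ) (μ₁ ν₁ : Measure (Fin D → ℝ))
    [IsProbabilityMeasure μ₁] [IsProbabilityMeasure ν₁]
    (s t : Set (Fin D → ℝ))
    (hs : volume s = 0) (hμ : μ₁ sᶜ = 0)
    (ht : volume t = 0) (hν : ν₁ tᶜ = 0)
    (v vt : NNReal)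
    (h : μ₁.conv (Measure.pi fun _ : Fin D => gaussianReal 0 v)
       = ν₁.conv (Measure.pi fun _ : Fin D => gaussianReal 0 vt)) :
    v = vt := by
  rcases lt_trichotomy v vt with hlt | heq | hgt
  · exact (GaussianVarIdentAux.aux μ₁ ν₁ s hs hμ v vt hlt h).elim
  · exact heq
  · exact (GaussianVarIdentAux.aux ν₁ μ₁ t ht hν vt v hgt h.symm).elim
end

section
/- Suppose T : ℝ^{kd} → ℝ^{kd} is 'block-wise' in the sense that T(z) = (T₁(z₁),...,T_d(z_d)) with each T_i : ℝ → ℝ^k, and suppose for each i there exist z_i⁽⁰⁾,...,z_i⁽ᵏ⁾ ∈ ℝ such that T_i(z_i⁽¹⁾)−T_i(z_i⁽⁰⁾), ..., T_i(z_i⁽ᵏ⁾)−T_i(z_i⁽⁰⁾) are linearly independent in ℝ^k. If an invertible-matrix relation T(z) = L T'(v(z)) + b holds for all z (for some function v, matrix L and vector b), then evaluating at the points z⁽ᵖ,ⁱ⁾ (which differ from a base point z⁽⁰⁾ only in coordinate i) yields an invertible kd×kd matrix Δ of differences T(z⁽ᵖ,ⁱ⁾)−T(z⁽⁰⁾) which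 is block diagonal with invertible blocks; hence L is invertible. -/
/-!
Perturb a base point `z₀` in one coordinate at a time. The matrix of differences of `T` at these
points is, up to reordering the index `(i, a) ↦ (a, i)`, block diagonal, and its `i`-th block is
the matrix whose columns are the independent differences of `Tᵢ`; so it is invertible. The affine
relation factors it as `L` times the difference matrix of `T' ∘ v`, hence `L` is invertible.
-/

open Matrix

namespace BlockwiseRelation

variable {X R m n : Type*}

def diffMatrix [Sub R] (f : X → n → R) (x₀ : X) (xs : m → X) : Matrix n m R :=
  Matrix.of fun a p => f (xs p) a - f x₀ a

theorem isUnit_diffMatrix_iff {K : Type*} [Field K] [Fintype m] [DecidableEq m]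
    {f : X → m → K} {x₀ : X} {xs : m → X} :
    IsUnit (diffMatrix f x₀ xs) ↔ LinearIndependent K fun p => f (xs p) - f x₀ :=
  linearIndependent_cols_iff_isUnit.symm

theorem diffMatrix_eq_mul_of_affine [CommRing R] [Fintype n] {f : X → m → R} {g : X → n → R}
    {L : Matrix m n R} {b : m → R} (h : ∀ x, f x = L *ᵥ g x + b) (x₀ : X) (xs : m → X) :
    diffMatrix f x₀ xs = L * diffMatrix g x₀ xs := by
  ext a p
  simp only [diffMatrix, h, of_apply, mul_apply, Pi.add_apply, mulVec, dotProduct, mul_sub,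
    Finset.sum_sub_distrib]
  ring

theorem isUnit_blockDiagonal_iff {ι : Type*} [CommRing R] [Fintype m] [DecidableEq m] [Fintype ι]
    [DecidableEq ι] {B : ι → Matrix m m R} :
    IsUnit (blockDiagonal B) ↔ ∀ i, IsUnit (B i) := by
  simp only [isUnit_iff_isUnit_det, det_blockDiagonal, IsUnit.prod_univ_iff]

theorem diffMatrix_of_blockwise {ι Y : Type*} [AddGroup R] [DecidableEq ι]
    {T : (ι → Y) → ι × m → R} {Ti : ι → Y → m → R}
    (hT : ∀ z i a, T z (i, a) = Ti i (z i) a) (z₀ : ι → Y) (zs : ι → m → Y) :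
    diffMatrix T z₀ (fun ip : ι × m => Function.update z₀ ip.1 (zs ip.1 ip.2)) =
      (blockDiagonal fun i => diffMatrix (Ti i) (z₀ i) (zs i)).submatrix
        (Equiv.prodComm ι m) (Equiv.prodComm ι m) := by
  ext ⟨j, a⟩ ⟨i, p⟩
  simp only [diffMatrix, submatrix_apply, Equiv.prodComm_apply, Prod.swap_prod_mk,
    blockDiagonal_apply, of_apply, hT]
  by_cases hji : j = i
  · subst hji
    simp
  · simp [hji]

end BlockwiseRelation

open BlockwiseRelation

/-- If `T` is block-wise with each block having `k` linearly independent difference vectors,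
and `T(z) = L T'(v(z)) + b` for all `z`, then `L` is invertible. -/
theorem invertible_of_blockwise_relation (d k : ℕ)
    (T : (Fin d → ℝ) → (Fin d × Fin k → ℝ))
    (Ti : Fin d → ℝ → (Fin k → ℝ))
    (hT : ∀ z i a, T z (i, a) = Ti i (z i) a)
    (hind : ∀ i : Fin d, ∃ (z0 : ℝ) (zs : Fin k → ℝ),
        LinearIndependent ℝ (fun p : Fin k => Ti i (zs p) - Ti i z0))
    (T' : (Fin d → ℝ) → (Fin d × Fin k → ℝ))
    (v : (Fin d → ℝ) → (Fin d → ℝ))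
    (L : Matrix (Fin d × Fin k) (Fin d × Fin k) ℝ) (b : Fin d × Fin k → ℝ)
    (hrel : ∀ z, T z = L.mulVec (T' (v z)) + b) :
    IsUnit L := by
  choose z₀ zs hzs using hind
  have hΔ : IsUnit
      (diffMatrix T z₀ fun ip : Fin d × Fin k => Function.update z₀ ip.1 (zs ip.1 ip.2)) := by
    rw [diffMatrix_of_blockwise hT, isUnit_submatrix_equiv, isUnit_blockDiagonal_iff]
    exact fun i => isUnit_diffMatrix_iff.mpr (hzs i)
  rw [diffMatrix_eq_mul_of_affine hrel] at hΔ
  exact isUnit_of_mul_isUnit_left hΔ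
end
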